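/- arXiv:funct-an/9709003 — 3 statements merged into one kernel-verified Lean document; each statement's English description precedes it below -/
import Mathlib

section
/- For the minimizer φ₀ of J[φ] = ∫_a^b (φ'(t)² + m²φ(t)²) dt subject to φ(a) = c_a, one has lim_{m→∞} J[φ₀] / (m c_a²) = 1. -/
open Real MeasureTheory intervalIntegral

/-- The minimizer of `J[φ] = ∫_a^b (φ'² + m²φ²)` subject to `φ(a) = c_a`. -/
noncomputable def phiMin (a b c_a m t : ℝ) : ℝ :=
  (c_a * (Real.exp (-m * a) + Real.exp (m * (a - 2 * b)))⁻¹) * Real.exp (-m * t)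
    + (c_a * (Real.exp (-m * a) + Real.exp (m * (a - 2 * b)))⁻¹ * Real.exp (-2 * m * b))
      * Real.exp (m * t)

/-- The value `J[φ₀]` of the functional at the minimizer. -/
noncomputable def Jmin (a b c_a m : ℝ) : ℝ :=
  ∫ t in a..b, (deriv (phiMin a b c_a m) t) ^ 2 + m ^ 2 * (phiMin a b c_a m t) ^ 2

/-! Since `φ₀'' = m² φ₀`, the integrand of `J` is `(φ₀ φ₀')'`, so `J[φ₀] = φ₀ φ₀' |_a^b`.
The choice of `d₂` makes `φ₀'(b) = 0` and that of `d₁` makes `φ₀(a) = c_a`, which leaves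
`J[φ₀] = -c_a φ₀'(a) = m c_a² tanh (m (b - a))`; and `tanh x → 1` as `x → ∞`. -/

theorem Real.tanh_eq_one_sub (x : ℝ) : tanh x = 1 - 2 / (exp (2 * x) + 1) := by
  have hx : exp (2 * x) = exp x * exp x := by rw [← exp_add]; ring_nf
  rw [tanh_eq, exp_neg, hx]
  have := exp_pos x
  field_simp
  ring

theorem Real.tendsto_tanh_atTop : Filter.Tendsto tanh Filter.atTop (nhds 1) := by
  have h : Filter.Tendsto (fun x : ℝ => exp (2 * x) + 1) Filter.atTop Filter.atTop :=
    Filter.tendsto_atTop_add_const_right _ _ <|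
      tendsto_exp_atTop.comp (Filter.tendsto_id.const_mul_atTop two_pos)
  simpa [← Real.tanh_eq_one_sub] using
    (tendsto_const_nhds (x := (1 : ℝ))).sub (h.const_div_atTop (2 : ℝ))

theorem integral_deriv_sq_add_sq_eq {f f' : ℝ → ℝ} {m a b : ℝ}
    (hf : ∀ t, HasDerivAt f (f' t) t) (hf' : ∀ t, HasDerivAt f' (m ^ 2 * f t) t) :
    ∫ t in a..b, f' t ^ 2 + m ^ 2 * f t ^ 2 = f b * f' b - f a * f' a := by
  have hcont_f : Continuous f := continuous_iff_continuousAt.2 fun t => (hf t).continuousAt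
  have hcont_f' : Continuous f' := continuous_iff_continuousAt.2 fun t => (hf' t).continuousAt
  refine integral_eq_sub_of_hasDerivAt (fun t _ => ((hf t).mul (hf' t)).congr_deriv (by ring)) ?_
  exact (by fun_prop : Continuous fun t => f' t ^ 2 + m ^ 2 * f t ^ 2).intervalIntegrable a b

section ExpCombination

variable (d₁ d₂ m : ℝ)

theorem hasDerivAt_exp_combination (t : ℝ) :
    HasDerivAt (fun t => d₁ * exp (-m * t) + d₂ * exp (m * t))
      (m * (d₂ * exp (m * t) - d₁ * exp (-m * t))) t := by
  have h (k : ℝ) : HasDerivAt (fun t => exp (k * t)) (exp (k * t) * k) t :=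
    ((hasDerivAt_id t).const_mul k).exp.congr_deriv (by simp)
  exact (((h (-m)).const_mul d₁).add ((h m).const_mul d₂)).congr_deriv (by ring)

theorem hasDerivAt_exp_combination_deriv (t : ℝ) :
    HasDerivAt (fun t => m * (d₂ * exp (m * t) - d₁ * exp (-m * t)))
      (m ^ 2 * (d₁ * exp (-m * t) + d₂ * exp (m * t))) t := by
  have h := (hasDerivAt_exp_combination (-d₁) d₂ m t).const_mul m
  exact (h.congr_of_eventuallyEq (.of_forall fun s => by ring)).congr_deriv (by ring)

end ExpCombination

theorem Jmin_eq (a b c_a m : ℝ) : Jmin a b c_a m = m * c_a ^ 2 * tanh (m * (b - a)) := by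
  set d₁ := c_a * (exp (-m * a) + exp (m * (a - 2 * b)))⁻¹
  set d₂ := d₁ * exp (-2 * m * b)
  set φ' := fun t => m * (d₂ * exp (m * t) - d₁ * exp (-m * t))
  have hφ : phiMin a b c_a m = fun t => d₁ * exp (-m * t) + d₂ * exp (m * t) := rfl
  have hφ' : deriv (phiMin a b c_a m) = φ' :=
    funext fun t => hφ ▸ (hasDerivAt_exp_combination d₁ d₂ m t).deriv
  have hJ : Jmin a b c_a m = phiMin a b c_a m b * φ' b - phiMin a b c_a m a * φ' a := by
    rw [Jmin, hφ']
    exact integral_deriv_sq_add_sq_eq (hφ ▸ hasDerivAt_exp_combination d₁ d₂ m)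
      (hφ ▸ hasDerivAt_exp_combination_deriv d₁ d₂ m)
  set P := exp (m * b)
  set Q := exp (m * (b - a))
  have hP : 0 < P := exp_pos _
  have hQ : 0 < Q := exp_pos _
  have e₁ : exp (-m * b) = P⁻¹ := by rw [← exp_neg]; ring_nf
  have e₂ : exp (-m * a) = Q / P := by rw [div_eq_mul_inv, ← exp_neg, ← exp_add]; ring_nf
  have e₃ : exp (m * a) = P / Q := by rw [div_eq_mul_inv, ← exp_neg, ← exp_add]; ring_nf
  have e₄ : exp (m * (a - 2 * b)) = (P * Q)⁻¹ := by rw [← exp_add, ← exp_neg]; ring_nf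
  have e₅ : exp (-2 * m * b) = (P ^ 2)⁻¹ := by
    rw [← exp_nat_mul, ← exp_neg]; ring_nf
  have e₆ : tanh (m * (b - a)) = (Q - Q⁻¹) / (Q + Q⁻¹) := by rw [tanh_eq, exp_neg]
  rw [hJ, hφ, e₆]
  simp only [φ', d₂, d₁, e₁, e₂, e₃, e₄, e₅]
  field_simp
  ring

theorem stmt_2 (a b c_a : ℝ) (hab : a < b) (hc : c_a ≠ 0) :
    Filter.Tendsto (fun m : ℝ => Jmin a b c_a m / (m * c_a ^ 2))
      Filter.atTop (nhds 1) := by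
  have h : Filter.Tendsto (fun m : ℝ => m * (b - a)) Filter.atTop Filter.atTop :=
    Filter.tendsto_id.atTop_mul_const (sub_pos.2 hab)
  refine (tendsto_tanh_atTop.comp h).congr' ?_
  filter_upwards [Filter.eventually_gt_atTop 0] with m hm
  rw [Jmin_eq, mul_div_cancel_left₀ _ (mul_ne_zero hm.ne' (pow_ne_zero 2 hc))]
  rfl
end

section
/- Let f : [0,L] → ℝ be C¹ with f(0) = 0. Then ∫_0^L f'(t)² dt ≥ (π/(2L))² ∫_0^L f(t)² dt. -/
/-!
With `c = π / (2L)`, the function `G t = c f(t)² cot(ct)` satisfies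
`G' = f'² - c² f² - (f' - c f cot(ct))² ≤ f'² - c² f²` on `(0, L)`, because `1 / sin² = 1 + cot²`.
`G` vanishes at `L` since `cot(π/2) = 0`, and tends to `0` at `0⁺` since `f(t) = O(t)` while
`cot(ct) = O(1/t)`. Integrating the derivative bound over `[0, L]` gives the inequality.
-/

open Real MeasureTheory intervalIntegral

open Filter Set Topology

theorem hasDerivAt_cot {x : ℝ} (hx : sin x ≠ 0) : HasDerivAt cot (-1 / sin x ^ 2) x := by
  rw [show cot = fun y => cos y / sin y from funext cot_eq_cos_div_sin]
  refine ((hasDerivAt_cos x).div (hasDerivAt_sin x) hx).congr_deriv ?_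
  congr 1
  linear_combination -sin_sq_add_cos_sq x

theorem tendsto_mul_cot_mul_nhdsNE {c : ℝ} (hc : c ≠ 0) :
    Tendsto (fun t => t * cot (c * t)) (𝓝[≠] 0) (𝓝 c⁻¹) := by
  have hcont : ContinuousAt (fun t => cos (c * t) / (c * sinc (c * t))) 0 := by
    apply ContinuousAt.div (by fun_prop) (by fun_prop)
    simpa using hc
  have hlim := hcont.tendsto.mono_left (nhdsWithin_le_nhds (s := {0}ᶜ))
  simp only [mul_zero, cos_zero, sinc_zero, mul_one, one_div] at hlim
  refine hlim.congr' ?_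
  filter_upwards [self_mem_nhdsWithin] with t ht
  rw [sinc_of_ne_zero (mul_ne_zero hc ht), cot_eq_cos_div_sin]
  field_simp

theorem tendsto_sq_mul_cot_of_differentiableWithinAt {f : ℝ → ℝ} {s : Set ℝ} {c : ℝ}
    (hf : DifferentiableWithinAt ℝ f s 0) (hf0 : f 0 = 0) (hc : c ≠ 0) :
    Tendsto (fun t => f t ^ 2 * cot (c * t)) (𝓝[s \ {0}] 0) (𝓝 0) := by
  have hslope := hasDerivWithinAt_iff_tendsto_slope.mp hf.hasDerivWithinAt
  have hcot := (tendsto_mul_cot_mul_nhdsNE hc).mono_left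
    (nhdsWithin_mono _ (sdiff_subset_compl s {0}))
  have hlim := ((hslope.pow 2).mul hcot).mul (tendsto_nhdsWithin_of_tendsto_nhds tendsto_id)
  rw [mul_zero] at hlim
  refine hlim.congr' ?_
  filter_upwards [self_mem_nhdsWithin] with t ht
  have ht0 : t ≠ 0 := ht.2
  simp only [slope_def_field, hf0, sub_zero, id]
  field_simp

theorem continuousOn_sq_mul_cot {f : ℝ → ℝ} {s : Set ℝ} {c : ℝ} (hf : ContinuousOn f s)
    (hf' : DifferentiableWithinAt ℝ f s 0) (hf0 : f 0 = 0) (hc : c ≠ 0)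
    (hsin : ∀ t ∈ s, t ≠ 0 → sin (c * t) ≠ 0) :
    ContinuousOn (fun t => f t ^ 2 * cot (c * t)) s := by
  intro t ht
  rcases eq_or_ne t 0 with rfl | ht0
  · rw [← continuousWithinAt_sdiff_self, ContinuousWithinAt, hf0, zero_pow two_ne_zero, zero_mul]
    exact tendsto_sq_mul_cot_of_differentiableWithinAt hf' hf0 hc
  · exact ((hf t ht).pow 2).mul <|
      (hasDerivAt_cot (hsin t ht ht0)).continuousAt.comp_continuousWithinAt
        (continuous_const_mul c).continuousWithinAt

theorem hasDerivAt_mul_sq_mul_cot {f : ℝ → ℝ} {f' c t : ℝ} (hf : HasDerivAt f f' t)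
    (ht : sin (c * t) ≠ 0) :
    HasDerivAt (fun s => c * (f s ^ 2 * cot (c * s)))
      (2 * c * f t * f' * cot (c * t) - c ^ 2 * f t ^ 2 / sin (c * t) ^ 2) t := by
  have hcot := (hasDerivAt_cot ht).comp t ((hasDerivAt_id t).const_mul c)
  refine (((hf.pow 2).mul hcot).const_mul c).congr_deriv ?_
  simp only [Function.comp_apply, Pi.pow_apply]
  field_simp
  ring

theorem two_mul_mul_cot_sub_le (c x y θ : ℝ) (hθ : sin θ ≠ 0) :
    2 * c * x * y * cot θ - c ^ 2 * x ^ 2 / sin θ ^ 2 ≤ y ^ 2 - c ^ 2 * x ^ 2 := by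
  have h : 1 / sin θ ^ 2 = 1 + cot θ ^ 2 := by
    rw [cot_eq_cos_div_sin]
    field_simp
    linear_combination (sin_sq_add_cos_sq θ).symm
  have := sq_nonneg (y - c * x * cot θ)
  rw [div_eq_mul_one_div _ (sin θ ^ 2), h]
  nlinarith

theorem ContDiffOn.integrableOn_deriv_sq {f : ℝ → ℝ} {a b : ℝ} (hab : a < b)
    (hf : ContDiffOn ℝ 1 f (Icc a b)) : IntegrableOn (fun t => deriv f t ^ 2) (Icc a b) := by
  rw [integrableOn_Icc_iff_integrableOn_Ioo]
  have hcont := hf.continuousOn_derivWithin (uniqueDiffOn_Icc hab) le_rfl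
  refine ((hcont.pow 2).integrableOn_Icc.mono_set Ioo_subset_Icc_self).congr_fun
    (fun t ht => ?_) measurableSet_Ioo
  rw [Pi.pow_apply, derivWithin_of_mem_nhds (Icc_mem_nhds ht.1 ht.2)]

theorem stmt_11 (L : ℝ) (hL : 0 < L) (f : ℝ → ℝ)
    (hf : ContDiffOn ℝ 1 f (Set.Icc 0 L)) (hf0 : f 0 = 0) :
    (π / (2 * L)) ^ 2 * (∫ t in (0:ℝ)..L, (f t) ^ 2)
      ≤ ∫ t in (0:ℝ)..L, (deriv f t) ^ 2 := by
  have hcL : π / (2 * L) * L = π / 2 := by field_simp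
  set c := π / (2 * L)
  have hc : 0 < c := by positivity
  have hsin : ∀ t ∈ Ioc 0 L, sin (c * t) ≠ 0 := fun t ht =>
    (sin_pos_of_pos_of_lt_pi (mul_pos hc ht.1) (by nlinarith [ht.2, pi_pos])).ne'
  set G := fun t => c * (f t ^ 2 * cot (c * t))
  have hG : ContinuousOn G (Icc 0 L) := continuousOn_const.mul <|
    continuousOn_sq_mul_cot hf.continuousOn (hf.differentiableOn one_ne_zero 0 ⟨le_rfl, hL.le⟩)
      hf0 hc.ne' fun t ht ht0 => hsin t ⟨lt_of_le_of_ne ht.1 ht0.symm, ht.2⟩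
  have hG' : ∀ t ∈ Ioo 0 L, HasDerivWithinAt G
      (2 * c * f t * deriv f t * cot (c * t) - c ^ 2 * f t ^ 2 / sin (c * t) ^ 2) (Ioi t) t :=
    fun t ht => (hasDerivAt_mul_sq_mul_cot (((hf.differentiableOn one_ne_zero t
      (Ioo_subset_Icc_self ht)).differentiableAt (Icc_mem_nhds ht.1 ht.2)).hasDerivAt)
        (hsin t (Ioo_subset_Ioc_self ht))).hasDerivWithinAt
  have hf2 : IntegrableOn (fun t => f t ^ 2) (Icc 0 L) := (hf.continuousOn.pow 2).integrableOn_Icc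
  have hdf2 := hf.integrableOn_deriv_sq hL
  -- Only the majorant `f'² - c² f²` has to be integrable here, not `G'`.
  have key := sub_le_integral_of_hasDeriv_right_of_le hL.le hG hG'
    (hdf2.sub (hf2.const_mul (c ^ 2))) fun t ht =>
      two_mul_mul_cot_sub_le c (f t) (deriv f t) (c * t) (hsin t (Ioo_subset_Ioc_self ht))
  have hG0 : G 0 = 0 := by simp [G, hf0]
  have hGL : G L = 0 := by simp [G, hcL, cot_eq_cos_div_sin]
  simp only [Pi.sub_apply] at key
  rw [hG0, hGL, sub_zero, intervalIntegral.integral_sub,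
    intervalIntegral.integral_const_mul] at key
  · linarith
  · exact (intervalIntegrable_iff_integrableOn_Icc_of_le hL.le).2 hdf2
  · exact (intervalIntegrable_iff_integrableOn_Icc_of_le hL.le).2 (hf2.const_mul _)
end

section
/- Let m > 0, a > 0, α ∈ ℝ. Among C² functions φ on [a,∞) with φ(a) = α and finite F(φ) = ∫_a^∞ (φ'(t)² + m²φ(t)²) t dt, the functional F is minimized by φ₀(t) = α·K₀(mt)/K₀(ma), and F(φ₀) = α²·ma·K₁(ma)/K₀(ma). -/
open Real MeasureTheory

/-- The modified Bessel function of the second kind, via its integral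
representation `K_ν(ξ) = ∫_0^∞ e^{-ξ cosh t} cosh(νt) dt` (valid for `ξ > 0`). -/
noncomputable def besselK (ν ξ : ℝ) : ℝ :=
  ∫ t in Set.Ioi (0:ℝ), Real.exp (-ξ * Real.cosh t) * Real.cosh (ν * t)

/-- The weighted energy functional `F(φ) = ∫_a^∞ (φ'(t)² + m²φ(t)²) t dt`. -/
noncomputable def Ffun (a m : ℝ) (φ : ℝ → ℝ) : ℝ :=
  ∫ t in Set.Ioi a, ((deriv φ t) ^ 2 + m ^ 2 * (φ t) ^ 2) * t

/-!
Write `K_k(ξ) = ∫₀^∞ cosh^k t · e^{-ξ cosh t} dt`, so that `K₀` and `K₁` are the Bessel functions,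
`K_k' = -K_{k+1}`, and integrating `(sinh t · e^{-ξ cosh t})'` gives `ξ K₂ = K₁ + ξ K₀`. Hence
`φ₀ = c K₀(m ·)` solves `(t φ₀')' = m² t φ₀`, and for any `g` the flux `t φ₀' g` has derivative
`(φ₀' g' + m² φ₀ g) t`. For `g = φ₀` the flux decays like `t⁻³`, so `F(φ₀) = -a φ₀(a) φ₀'(a)`.
For a competitor `φ = φ₀ + ψ` with `ψ(a) = 0` we have
`F(φ) = F(φ₀) + F(ψ) + 2 ∫ (φ₀' ψ' + m² φ₀ ψ) t`. The cross term is the limit at `∞` of the flux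
`t φ₀' ψ`, whose square is dominated by `ψ² t` and is therefore integrable; so the limit is `0`.
-/

open Set Filter Topology

noncomputable def coshMoment (k : ℕ) (ξ : ℝ) : ℝ :=
  ∫ t in Ioi 0, cosh t ^ k * exp (-ξ * cosh t)

section CoshMoment

variable {ξ : ℝ}

lemma besselK_zero (ξ : ℝ) : besselK 0 ξ = coshMoment 0 ξ := by
  simp [besselK, coshMoment]

lemma besselK_one (ξ : ℝ) : besselK 1 ξ = coshMoment 1 ξ := by
  simp [besselK, coshMoment, mul_comm]

lemma cosh_pow_mul_exp_neg_le (hξ : 0 < ξ) (k : ℕ) {t : ℝ} (ht : 0 ≤ t) :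
    cosh t ^ k * exp (-ξ * cosh t) ≤ k.factorial * (2 / ξ) ^ k * exp (-(ξ / 2) * t) := by
  have hpow : cosh t ^ k ≤ k.factorial * (2 / ξ) ^ k * exp (ξ / 2 * cosh t) := by
    have h := pow_div_factorial_le_exp (ξ / 2 * cosh t) (by positivity) k
    rw [div_le_iff₀ (by positivity)] at h
    calc cosh t ^ k = (2 / ξ) ^ k * (ξ / 2 * cosh t) ^ k := by
          rw [mul_pow, ← mul_assoc, ← mul_pow]; field_simp; ring
      _ ≤ (2 / ξ) ^ k * (exp (ξ / 2 * cosh t) * k.factorial) := by gcongr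
      _ = _ := by ring
  have ht_le : t ≤ cosh t := (self_le_sinh_iff.mpr ht).trans (sinh_lt_cosh t).le
  calc cosh t ^ k * exp (-ξ * cosh t)
      ≤ k.factorial * (2 / ξ) ^ k * exp (ξ / 2 * cosh t) * exp (-ξ * cosh t) := by gcongr
    _ = k.factorial * (2 / ξ) ^ k * exp (-(ξ / 2) * cosh t) := by
      rw [mul_assoc, ← exp_add]; ring_nf
    _ ≤ k.factorial * (2 / ξ) ^ k * exp (-(ξ / 2) * t) := by
      gcongr _ * exp ?_; nlinarith

lemma integrableOn_cosh_pow_mul_exp_neg (hξ : 0 < ξ) (k : ℕ) :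
    IntegrableOn (fun t => cosh t ^ k * exp (-ξ * cosh t)) (Ioi 0) := by
  refine ((exp_neg_integrableOn_Ioi 0 (half_pos hξ)).const_mul (k.factorial * (2 / ξ) ^ k)).mono'
    (by fun_prop) ?_
  filter_upwards [ae_restrict_mem measurableSet_Ioi] with t ht
  rw [norm_of_nonneg (by positivity)]
  exact cosh_pow_mul_exp_neg_le hξ k (le_of_lt ht)

lemma coshMoment_pos (hξ : 0 < ξ) (k : ℕ) : 0 < coshMoment k ξ := by
  rw [coshMoment, setIntegral_pos_iff_support_of_nonneg_ae (.of_forall fun t => by positivity)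
    (integrableOn_cosh_pow_mul_exp_neg hξ k)]
  have : Function.support (fun t => cosh t ^ k * exp (-ξ * cosh t)) = univ :=
    eq_univ_of_forall fun t => (by positivity : cosh t ^ k * exp (-ξ * cosh t) ≠ 0)
  simp only [this, univ_inter, Real.volume_Ioi, ENNReal.zero_lt_top]

lemma coshMoment_zero_le_one (hξ : 0 < ξ) : coshMoment 0 ξ ≤ coshMoment 1 ξ := by
  refine setIntegral_mono_on (integrableOn_cosh_pow_mul_exp_neg hξ 0)
    (integrableOn_cosh_pow_mul_exp_neg hξ 1) measurableSet_Ioi fun t _ => ?_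
  rw [pow_zero, pow_one]
  exact mul_le_mul_of_nonneg_right (one_le_cosh t) (exp_pos _).le

lemma coshMoment_one_le (hξ : 0 < ξ) : coshMoment 1 ξ ≤ 4 / ξ ^ 2 := by
  calc coshMoment 1 ξ ≤ ∫ t in Ioi 0, (1:ℕ).factorial * (2 / ξ) ^ 1 * exp (-(ξ / 2) * t) :=
        setIntegral_mono_on (integrableOn_cosh_pow_mul_exp_neg hξ 1)
          ((exp_neg_integrableOn_Ioi 0 (half_pos hξ)).const_mul _) measurableSet_Ioi
          fun t ht => cosh_pow_mul_exp_neg_le hξ 1 (le_of_lt ht)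
    _ = 4 / ξ ^ 2 := by
      rw [integral_const_mul, integral_exp_mul_Ioi (by linarith) 0]
      field_simp
      norm_num

lemma hasDerivAt_coshMoment (k : ℕ) (hξ : 0 < ξ) :
    HasDerivAt (coshMoment k) (-coshMoment (k + 1) ξ) ξ := by
  have hbound : ∀ t ∈ Ioi (0 : ℝ), ∀ x ∈ Metric.ball ξ (ξ / 2),
      ‖-(cosh t ^ (k + 1) * exp (-x * cosh t))‖
        ≤ (k + 1).factorial * (2 / (ξ / 2)) ^ (k + 1) * exp (-(ξ / 2 / 2) * t) := by
    intro t ht x hx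
    have hx : ξ / 2 < x := by
      rw [Metric.mem_ball, Real.dist_eq, abs_lt] at hx; linarith
    rw [norm_neg, norm_of_nonneg (by positivity)]
    refine le_trans ?_ (cosh_pow_mul_exp_neg_le (half_pos hξ) (k + 1) (le_of_lt ht))
    gcongr
  have h := hasDerivAt_integral_of_dominated_loc_of_deriv_le
    (F := fun x t => cosh t ^ k * exp (-x * cosh t))
    (F' := fun x t => -(cosh t ^ (k + 1) * exp (-x * cosh t)))
    (μ := volume.restrict (Ioi 0)) (Metric.ball_mem_nhds ξ (half_pos hξ))
    (.of_forall fun x => by fun_prop) (integrableOn_cosh_pow_mul_exp_neg hξ k) (by fun_prop)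
    ((ae_restrict_iff' measurableSet_Ioi).mpr (.of_forall hbound))
    ((exp_neg_integrableOn_Ioi 0 (by positivity)).const_mul _)
    (.of_forall fun t x _ => ?_)
  · unfold coshMoment
    simpa only [integral_neg] using h.2
  · exact (((hasDerivAt_neg x).mul_const (cosh t)).exp.const_mul (cosh t ^ k)).congr_deriv
      (by ring)

lemma coshMoment_two (hξ : 0 < ξ) :
    ξ * coshMoment 2 ξ = coshMoment 1 ξ + ξ * coshMoment 0 ξ := by
  have hint := integrableOn_cosh_pow_mul_exp_neg hξ
  have hderiv : ∀ t, HasDerivAt (fun s => sinh s * exp (-ξ * cosh s))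
      (cosh t ^ 1 * exp (-ξ * cosh t) + ξ * (cosh t ^ 0 * exp (-ξ * cosh t))
        - ξ * (cosh t ^ 2 * exp (-ξ * cosh t))) t := fun t =>
    ((hasDerivAt_sinh t).mul ((hasDerivAt_cosh t).const_mul (-ξ)).exp).congr_deriv
      (by rw [← sub_eq_zero]; linear_combination (-ξ * exp (-ξ * cosh t)) * sinh_sq t)
  have hint' := ((hint 1).add ((hint 0).const_mul ξ)).sub ((hint 2).const_mul ξ)
  have hsinh : IntegrableOn (fun s => sinh s * exp (-ξ * cosh s)) (Ioi 0) := by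
    refine (hint 1).mono' (by fun_prop) (.of_forall fun t => ?_)
    rw [norm_mul, norm_of_nonneg (exp_pos _).le, norm_eq_abs, abs_sinh, ← cosh_abs, pow_one]
    gcongr
    exact (sinh_lt_cosh _).le
  have h := integral_Ioi_of_hasDerivAt_of_tendsto' (fun t _ => hderiv t) hint'
    (tendsto_zero_of_hasDerivAt_of_integrableOn_Ioi (fun t _ => hderiv t) hint' hsinh)
  rw [integral_sub (by exact (hint 1).add ((hint 0).const_mul ξ)) (by exact (hint 2).const_mul ξ),
    integral_add (hint 1) (by exact (hint 0).const_mul ξ), integral_const_mul, integral_const_mul,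
    sinh_zero, zero_mul, sub_zero] at h
  unfold coshMoment
  linarith

end CoshMoment

noncomputable def besselKProfile (m c t : ℝ) : ℝ := c * coshMoment 0 (m * t)

section BesselKProfile

variable {m c a t : ℝ}

lemma hasDerivAt_coshMoment_mul (k : ℕ) (hm : 0 < m) (ht : 0 < t) :
    HasDerivAt (fun s => coshMoment k (m * s)) (-(m * coshMoment (k + 1) (m * t))) t :=
  ((hasDerivAt_coshMoment k (mul_pos hm ht)).comp t ((hasDerivAt_id' t).const_mul m)).congr_deriv
    (by ring)

lemma hasDerivAt_besselKProfile (hm : 0 < m) (ht : 0 < t) :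
    HasDerivAt (besselKProfile m c) (-(c * m * coshMoment 1 (m * t))) t :=
  ((hasDerivAt_coshMoment_mul 0 hm ht).const_mul c).congr_deriv (by ring)

lemma continuousOn_coshMoment_mul (k : ℕ) (hm : 0 < m) :
    ContinuousOn (fun t => coshMoment k (m * t)) (Ioi 0) :=
  fun _ ht => (hasDerivAt_coshMoment_mul k hm ht).continuousAt.continuousWithinAt

lemma hasDerivAt_mul_deriv_besselKProfile (hm : 0 < m) (ht : 0 < t) :
    HasDerivAt (fun s => s * -(c * m * coshMoment 1 (m * s))) (m ^ 2 * t * besselKProfile m c t)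
      t := by
  refine ((hasDerivAt_id' t).mul ((hasDerivAt_coshMoment_mul 1 hm ht).const_mul (c * m)).neg)
    |>.congr_deriv ?_
  simp only [Pi.neg_apply, besselKProfile, Nat.reduceAdd]
  linear_combination (c * m) * coshMoment_two (mul_pos hm ht)

lemma hasDerivAt_flux (hm : 0 < m) (ht : 0 < t) {g : ℝ → ℝ} {g' : ℝ} (hg : HasDerivAt g g' t) :
    HasDerivAt (fun s => s * -(c * m * coshMoment 1 (m * s)) * g s)
      ((-(c * m * coshMoment 1 (m * t)) * g' + m ^ 2 * besselKProfile m c t * g t) * t) t :=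
  ((hasDerivAt_mul_deriv_besselKProfile hm ht).mul hg).congr_deriv (by ring)

lemma hasDerivAt_flux_self (hm : 0 < m) (ht : 0 < t) :
    HasDerivAt (fun s => s * -(c * m * coshMoment 1 (m * s)) * besselKProfile m c s)
      (((-(c * m * coshMoment 1 (m * t))) ^ 2 + m ^ 2 * besselKProfile m c t ^ 2) * t) t :=
  (hasDerivAt_flux hm ht (hasDerivAt_besselKProfile hm ht)).congr_deriv (by ring)

lemma sq_flux_le (hm : 0 < m) (ha : 0 < a) (hat : a ≤ t) (y : ℝ) :
    (t * -(c * m * coshMoment 1 (m * t)) * y) ^ 2 ≤ 16 * c ^ 2 / (m ^ 2 * a ^ 3) * (y ^ 2 * t) := by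
  have ht := ha.trans_le hat
  have hK := coshMoment_one_le (mul_pos hm ht)
  have hK_nonneg := (coshMoment_pos (mul_pos hm ht) 1).le
  calc (t * -(c * m * coshMoment 1 (m * t)) * y) ^ 2
      = (t * m * coshMoment 1 (m * t)) ^ 2 * (c ^ 2 * y ^ 2) := by ring
    _ ≤ (t * m * (4 / (m * t) ^ 2)) ^ 2 * (c ^ 2 * y ^ 2) := by gcongr
    _ = 16 * c ^ 2 / (m ^ 2 * t ^ 3) * (y ^ 2 * t) := by field_simp; ring
    _ ≤ 16 * c ^ 2 / (m ^ 2 * a ^ 3) * (y ^ 2 * t) := by gcongr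

lemma tendsto_flux_self (hm : 0 < m) :
    Tendsto (fun t => t * -(c * m * coshMoment 1 (m * t)) * besselKProfile m c t) atTop (𝓝 0) := by
  have hlim : Tendsto (fun t : ℝ => 16 * c ^ 2 / m ^ 3 * (t ^ 3)⁻¹) atTop (𝓝 0) := by
    rw [← mul_zero (16 * c ^ 2 / m ^ 3)]
    exact ((tendsto_pow_atTop three_ne_zero).inv_tendsto_atTop).const_mul _
  refine squeeze_zero_norm' ?_ hlim
  filter_upwards [eventually_gt_atTop 0] with t ht
  have hmt := mul_pos hm ht
  have h₁ := coshMoment_one_le hmt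
  have h₀ := (coshMoment_zero_le_one hmt).trans h₁
  have h₀' := (coshMoment_pos hmt 0).le
  have h₁' := (coshMoment_pos hmt 1).le
  rw [besselKProfile, show t * -(c * m * coshMoment 1 (m * t)) * (c * coshMoment 0 (m * t))
    = -(c ^ 2 * m * t * (coshMoment 1 (m * t) * coshMoment 0 (m * t))) by ring, norm_neg,
    norm_of_nonneg (by positivity)]
  calc c ^ 2 * m * t * (coshMoment 1 (m * t) * coshMoment 0 (m * t))
      ≤ c ^ 2 * m * t * (4 / (m * t) ^ 2 * (4 / (m * t) ^ 2)) := by gcongr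
    _ = 16 * c ^ 2 / m ^ 3 * (t ^ 3)⁻¹ := by field_simp; ring

lemma integrableOn_energy_besselKProfile (hm : 0 < m) (ha : 0 < a) :
    IntegrableOn
      (fun t => ((-(c * m * coshMoment 1 (m * t))) ^ 2 + m ^ 2 * besselKProfile m c t ^ 2) * t)
      (Ioi a) :=
  integrableOn_Ioi_deriv_of_nonneg (hasDerivAt_flux_self hm ha).continuousAt.continuousWithinAt
    (fun t ht => hasDerivAt_flux_self hm (ha.trans ht))
    (fun t ht => mul_nonneg (by positivity) (ha.trans ht).le) (tendsto_flux_self hm)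

lemma Ffun_besselKProfile (hm : 0 < m) (ha : 0 < a) :
    Ffun a m (besselKProfile m c) =
      c ^ 2 * m * a * coshMoment 0 (m * a) * coshMoment 1 (m * a) := by
  rw [Ffun, setIntegral_congr_fun measurableSet_Ioi fun t ht => by
      rw [(hasDerivAt_besselKProfile hm (ha.trans ht)).deriv],
    integral_Ioi_of_hasDerivAt_of_nonneg
      (hasDerivAt_flux_self hm ha).continuousAt.continuousWithinAt
      (fun t ht => hasDerivAt_flux_self hm (ha.trans ht))
      (fun t ht => mul_nonneg (by positivity) (ha.trans ht).le) (tendsto_flux_self hm),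
    besselKProfile]
  ring

end BesselKProfile

lemma eq_zero_of_tendsto_of_integrableOn_Ioi {g : ℝ → ℝ} {a l : ℝ} (hg : IntegrableOn g (Ioi a))
    (hl : Tendsto g atTop (𝓝 l)) : l = 0 :=
  IntegrableAtFilter.eq_zero_of_tendsto ⟨Ioi a, Ioi_mem_atTop a, hg⟩
    (fun s hs => by
      obtain ⟨b, hb⟩ := mem_atTop_sets.mp hs
      exact top_le_iff.mp (volume_Ici (a := b) ▸ measure_mono hb))
    hl

section Minimization

variable {m c a : ℝ}

lemma integrableOn_energy_sub (ha : 0 ≤ a) {f f' g g' : ℝ → ℝ}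
    (hf : AEStronglyMeasurable f (volume.restrict (Ioi a)))
    (hf' : AEStronglyMeasurable f' (volume.restrict (Ioi a)))
    (hg : AEStronglyMeasurable g (volume.restrict (Ioi a)))
    (hg' : AEStronglyMeasurable g' (volume.restrict (Ioi a)))
    (hEf : IntegrableOn (fun t => (f' t ^ 2 + m ^ 2 * f t ^ 2) * t) (Ioi a))
    (hEg : IntegrableOn (fun t => (g' t ^ 2 + m ^ 2 * g t ^ 2) * t) (Ioi a)) :
    IntegrableOn (fun t => ((f' t - g' t) ^ 2 + m ^ 2 * (f t - g t) ^ 2) * t) (Ioi a) := by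
  refine ((hEf.add hEg).const_mul 2).mono' (by fun_prop) ?_
  filter_upwards [ae_restrict_mem measurableSet_Ioi] with t ht
  have ht₀ : 0 ≤ t := ha.trans ht.le
  rw [norm_of_nonneg (by positivity), Pi.add_apply]
  nlinarith [mul_nonneg (sq_nonneg (f' t + g' t)) ht₀,
    mul_nonneg (mul_nonneg (sq_nonneg m) (sq_nonneg (f t + g t))) ht₀]

lemma integrableOn_sq_mul_of_energy (hm : m ≠ 0) (ha : 0 ≤ a) {f f' : ℝ → ℝ}
    (hf : AEStronglyMeasurable f (volume.restrict (Ioi a)))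
    (hE : IntegrableOn (fun t => (f' t ^ 2 + m ^ 2 * f t ^ 2) * t) (Ioi a)) :
    IntegrableOn (fun t => f t ^ 2 * t) (Ioi a) := by
  refine (hE.const_mul (m ^ 2)⁻¹).mono' (by fun_prop) ?_
  filter_upwards [ae_restrict_mem measurableSet_Ioi] with t ht
  have ht₀ : 0 ≤ t := ha.trans ht.le
  rw [norm_of_nonneg (by positivity), ← div_eq_inv_mul, le_div_iff₀ (by positivity)]
  nlinarith [mul_nonneg (sq_nonneg (f' t)) ht₀]

lemma integral_cross_eq_zero (hm : 0 < m) (ha : 0 < a) {ψ ψ' : ℝ → ℝ}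
    (hψc : ContinuousWithinAt ψ (Ici a) a) (hψd : ∀ t ∈ Ioi a, HasDerivAt ψ (ψ' t) t)
    (hψa : ψ a = 0) (hψ2 : IntegrableOn (fun t => ψ t ^ 2 * t) (Ioi a))
    (hX : IntegrableOn (fun t =>
      (-(c * m * coshMoment 1 (m * t)) * ψ' t + m ^ 2 * besselKProfile m c t * ψ t) * t) (Ioi a)) :
    ∫ t in Ioi a,
      (-(c * m * coshMoment 1 (m * t)) * ψ' t + m ^ 2 * besselKProfile m c t * ψ t) * t = 0 := by
  set A := fun s => s * -(c * m * coshMoment 1 (m * s)) * ψ s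
  have hA : ∀ t ∈ Ioi a, HasDerivAt A
      ((-(c * m * coshMoment 1 (m * t)) * ψ' t + m ^ 2 * besselKProfile m c t * ψ t) * t) t :=
    fun t ht => hasDerivAt_flux hm (ha.trans ht) (hψd t ht)
  have hAc : ContinuousWithinAt A (Ici a) a :=
    (hasDerivAt_mul_deriv_besselKProfile (c := c) hm ha).continuousAt.continuousWithinAt.mul hψc
  have hlim := tendsto_limUnder_of_hasDerivAt_of_integrableOn_Ioi hA hX
  have hA2 : IntegrableOn (fun t => A t ^ 2) (Ioi a) := by
    refine (hψ2.const_mul (16 * c ^ 2 / (m ^ 2 * a ^ 3))).mono' ?_ ?_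
    · exact ((show ContinuousOn A (Ioi a) from fun t ht =>
        (hA t ht).continuousAt.continuousWithinAt).pow 2).aestronglyMeasurable measurableSet_Ioi
    · filter_upwards [ae_restrict_mem measurableSet_Ioi] with t ht
      rw [norm_of_nonneg (sq_nonneg _)]
      exact sq_flux_le hm ha ht.le (ψ t)
  rw [integral_Ioi_of_hasDerivAt_of_tendsto hAc hA hX hlim, show A a = 0 by simp [A, hψa], sub_zero]
  exact pow_eq_zero_iff two_ne_zero |>.mp (eq_zero_of_tendsto_of_integrableOn_Ioi hA2 (hlim.pow 2))

theorem Ffun_besselKProfile_le (hm : 0 < m) (ha : 0 < a) {φ : ℝ → ℝ}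
    (hφc : ContinuousOn φ (Ici a)) (hφd : DifferentiableOn ℝ φ (Ioi a))
    (hφa : φ a = besselKProfile m c a)
    (hint : IntegrableOn (fun t => ((deriv φ t) ^ 2 + m ^ 2 * (φ t) ^ 2) * t) (Ioi a)) :
    Ffun a m (besselKProfile m c) ≤ Ffun a m φ := by
  set φ₀ := besselKProfile m c
  set p := fun t => -(c * m * coshMoment 1 (m * t))
  have hint₀ : IntegrableOn (fun t => (p t ^ 2 + m ^ 2 * φ₀ t ^ 2) * t) (Ioi a) :=
    integrableOn_energy_besselKProfile hm ha
  have hψd : ∀ t ∈ Ioi a, HasDerivAt (fun s => φ s - φ₀ s) (deriv φ t - p t) t := fun t ht =>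
    ((hφd.differentiableAt (Ioi_mem_nhds ht)).hasDerivAt).sub
      (hasDerivAt_besselKProfile hm (ha.trans ht))
  have hφ₀c : ContinuousOn φ₀ (Ici a) :=
    (continuousOn_const.mul (continuousOn_coshMoment_mul 0 hm)).mono fun _ ht => ha.trans_le ht
  have hφm : AEStronglyMeasurable φ (volume.restrict (Ioi a)) :=
    (hφc.mono Ioi_subset_Ici_self).aestronglyMeasurable measurableSet_Ioi
  have hφ₀m : AEStronglyMeasurable φ₀ (volume.restrict (Ioi a)) :=
    (hφ₀c.mono Ioi_subset_Ici_self).aestronglyMeasurable measurableSet_Ioi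
  have hpm : AEStronglyMeasurable p (volume.restrict (Ioi a)) :=
    ((continuousOn_const.mul (continuousOn_coshMoment_mul 1 hm)).neg.mono
      fun _ ht => ha.trans ht).aestronglyMeasurable measurableSet_Ioi
  have hintψ := integrableOn_energy_sub ha.le hφm (measurable_deriv φ).aestronglyMeasurable
    hφ₀m hpm hint hint₀
  set X := fun t => (p t * (deriv φ t - p t) + m ^ 2 * φ₀ t * (φ t - φ₀ t)) * t
  have hX : IntegrableOn X (Ioi a) :=
    IntegrableOn.congr_fun (((hint.sub hint₀).sub hintψ).div_const 2)
      (fun t _ => by simp only [X, Pi.sub_apply]; ring) measurableSet_Ioi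
  have hX₀ : ∫ t in Ioi a, X t = 0 :=
    integral_cross_eq_zero hm ha ((hφc.sub hφ₀c) a self_mem_Ici) hψd (by simp [hφa])
      (integrableOn_sq_mul_of_energy hm.ne' ha.le (hφm.sub hφ₀m) hintψ) hX
  calc Ffun a m φ₀ = ∫ t in Ioi a, (p t ^ 2 + m ^ 2 * φ₀ t ^ 2) * t + 2 * X t := by
        rw [integral_add hint₀ (hX.const_mul 2), integral_const_mul, hX₀, mul_zero, add_zero, Ffun]
        exact setIntegral_congr_fun measurableSet_Ioi fun t ht => by
          rw [(hasDerivAt_besselKProfile hm (ha.trans ht)).deriv]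
    _ ≤ Ffun a m φ := by
      refine setIntegral_mono_on (hint₀.add (hX.const_mul 2)) hint measurableSet_Ioi fun t ht => ?_
      have hψ : 0 ≤ ((deriv φ t - p t) ^ 2 + m ^ 2 * (φ t - φ₀ t) ^ 2) * t :=
        mul_nonneg (by positivity) (ha.trans ht).le
      simp only [X] at hψ ⊢
      linarith

end Minimization

theorem stmt_17 (m a α : ℝ) (hm : 0 < m) (ha : 0 < a)
    (φ₀ : ℝ → ℝ) (hφ₀ : ∀ t, φ₀ t = α * besselK 0 (m * t) / besselK 0 (m * a)) :
    Ffun a m φ₀ = α ^ 2 * m * a * besselK 1 (m * a) / besselK 0 (m * a) ∧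
      ∀ φ : ℝ → ℝ, ContDiffOn ℝ 2 φ (Set.Ici a) → φ a = α →
        IntegrableOn (fun t => ((deriv φ t) ^ 2 + m ^ 2 * (φ t) ^ 2) * t)
          (Set.Ioi a) →
        Ffun a m φ₀ ≤ Ffun a m φ := by
  have hK₀ := coshMoment_pos (mul_pos hm ha) 0
  obtain rfl : φ₀ = besselKProfile m (α / coshMoment 0 (m * a)) := funext fun t => by
    rw [hφ₀, besselKProfile, besselK_zero, besselK_zero]; ring
  refine ⟨?_, fun φ hφ hφa hint => Ffun_besselKProfile_le hm ha hφ.continuousOn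
    (hφ.differentiableOn two_ne_zero |>.mono Ioi_subset_Ici_self) ?_ hint⟩
  · rw [Ffun_besselKProfile hm ha, besselK_zero, besselK_one]
    field_simp
  · rw [hφa, besselKProfile]
    field_simp
end
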